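/- arXiv:2212.10643 — 2 statements merged into one kernel-verified Lean document; each statement's English description precedes it below -/
import Mathlib

section
/- Let G be a simple graph with maximum degree at most 4 and let φ be a proper coloring of G. Then φ is a proper coloring of the square G² (i.e., φ assigns distinct colors to any two distinct vertices at distance at most 2 in G) if and only if φ is a 3-PCF coloring of G, i.e., for every vertex v at least min{3, d_G(v)} colors appear on exactly one neighbor of v. -/
/-! Given properness, `φ` colors `G²` properly iff it is injective on every neighbourhood. If the
neighbourhood of `x` is rainbow, all its `d(x)` colors are unique. If two neighbours of `x` share a
color, neither of them carries a unique color, so `x` has at most `d(x) - 2` unique colors; since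
`2 ≤ d(x) ≤ 4`, that is less than `min 3 d(x)`. -/

/-- An `h`-PCF coloring of `G`: a proper coloring `φ` such that for every vertex `v`,
at least `min h (d_G(v))` colors appear on exactly one neighbor of `v`. -/
def SimpleGraph.IsPCFColoring {V α : Type*} (G : SimpleGraph V) (h : ℕ)
    (φ : V → α) : Prop :=
  (∀ ⦃u w : V⦄, G.Adj u w → φ u ≠ φ w) ∧
  ∀ v : V, min h {u | G.Adj v u}.ncard ≤
    {c : α | {u | G.Adj v u ∧ φ u = c}.ncard = 1}.ncard

/-- `G` admits an `h`-PCF `k`-coloring. -/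
def SimpleGraph.HasPCFColoring {V : Type*} (G : SimpleGraph V) (h k : ℕ) : Prop :=
  ∃ φ : V → Fin k, G.IsPCFColoring h φ

/-- The `S`-reduced graph `G*S`: delete `S`, and join two distinct nonadjacent
vertices outside `S` that have a common neighbor in `S` (vertices of `S`
remain as isolated vertices). -/
def SimpleGraph.reduce {V : Type*} (G : SimpleGraph V) (S : Set V) :
    SimpleGraph V where
  Adj u w := u ∉ S ∧ w ∉ S ∧ u ≠ w ∧
    (G.Adj u w ∨ ∃ s ∈ S, G.Adj u s ∧ G.Adj s w)
  symm := by
    refine ⟨?_⟩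
    rintro u w ⟨hu, hw, hne, h | ⟨s, hs, h1, h2⟩⟩
    · exact ⟨hw, hu, hne.symm, Or.inl h.symm⟩
    · exact ⟨hw, hu, hne.symm, Or.inr ⟨s, hs, h2.symm, h1.symm⟩⟩
  loopless := ⟨fun u h => h.2.2.1 rfl⟩

section UniqueColors

open Set

variable {V α : Type*}

def uniqueColors (s : Set V) (φ : V → α) : Set α :=
  {c | {u | u ∈ s ∧ φ u = c}.ncard = 1}

variable {s : Set V} {φ : V → α}

theorem mem_uniqueColors {c : α} :
    c ∈ uniqueColors s φ ↔ ∃ a ∈ s, φ a = c ∧ ∀ b ∈ s, φ b = c → b = a := by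
  simp only [uniqueColors, mem_ofPred_eq, ncard_eq_one, Set.ext_iff, mem_singleton_iff]
  constructor
  · rintro ⟨a, ha⟩
    obtain ⟨has, hac⟩ := (ha a).mpr rfl
    exact ⟨a, has, hac, fun b hb hbc => (ha b).mp ⟨hb, hbc⟩⟩
  · rintro ⟨a, has, hac, huniq⟩
    exact ⟨a, fun b => ⟨fun ⟨hb, hbc⟩ => huniq b hb hbc, by rintro rfl; exact ⟨has, hac⟩⟩⟩

theorem uniqueColors_eq_image_of_injOn (hφ : s.InjOn φ) : uniqueColors s φ = φ '' s := by
  ext c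
  rw [mem_uniqueColors]
  constructor
  · rintro ⟨a, has, rfl, -⟩
    exact mem_image_of_mem φ has
  · rintro ⟨a, has, rfl⟩
    exact ⟨a, has, rfl, fun b hb hab => hφ hb has hab⟩

theorem uniqueColors_subset_image_sdiff_pair {u w : V} (hu : u ∈ s) (hw : w ∈ s) (hne : u ≠ w)
    (hφ : φ u = φ w) : uniqueColors s φ ⊆ φ '' (s \ {u, w}) := by
  intro c hc
  obtain ⟨a, has, rfl, huniq⟩ := mem_uniqueColors.mp hc
  refine ⟨a, ⟨has, ?_⟩, rfl⟩
  rintro (rfl | rfl)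
  · exact hne (huniq w hw hφ.symm).symm
  · exact hne (huniq u hu hφ)

theorem ncard_uniqueColors_add_two_le {u w : V} (hs : s.Finite) (hu : u ∈ s) (hw : w ∈ s)
    (hne : u ≠ w) (hφ : φ u = φ w) : (uniqueColors s φ).ncard + 2 ≤ s.ncard := by
  have hsdiff : (uniqueColors s φ).ncard ≤ (s \ {u, w}).ncard :=
    (ncard_le_ncard (uniqueColors_subset_image_sdiff_pair hu hw hne hφ) (hs.sdiff.image φ)).trans
      (ncard_image_le hs.sdiff)
  have hsplit := ncard_sdiff_add_ncard_of_subset (insert_subset hu (singleton_subset_iff.mpr hw)) hs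
  rw [ncard_pair hne] at hsplit
  omega

end UniqueColors

theorem square_coloring_iff_three_pcf {V α : Type*} [Fintype V]
    (G : SimpleGraph V) (φ : V → α)
    (hΔ : ∀ v : V, {u | G.Adj v u}.ncard ≤ 4)
    (hproper : ∀ ⦃u w : V⦄, G.Adj u w → φ u ≠ φ w) :
    (∀ u w : V, u ≠ w → (G.Adj u w ∨ ∃ x : V, G.Adj u x ∧ G.Adj x w) →
      φ u ≠ φ w) ↔ G.IsPCFColoring 3 φ := by
  constructor
  · intro hsq
    refine ⟨hproper, fun v => ?_⟩
    have hinj : (G.neighborSet v).InjOn φ := fun a ha b hb hab =>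
      by_contra fun hne => hsq a b hne (Or.inr ⟨v, ha.symm, hb⟩) hab
    change _ ≤ (uniqueColors (G.neighborSet v) φ).ncard
    rw [uniqueColors_eq_image_of_injOn hinj, hinj.ncard_image]
    exact min_le_right _ _
  · rintro ⟨-, hpcf⟩ u w hne (hadj | ⟨x, hux, hxw⟩) hφ
    · exact hproper hadj hφ
    · have hunique : min 3 (G.neighborSet x).ncard ≤ (uniqueColors (G.neighborSet x) φ).ncard :=
        hpcf x
      have hdeg : (G.neighborSet x).ncard ≤ 4 := hΔ x
      have hrepeat :
          (uniqueColors (G.neighborSet x) φ).ncard + 2 ≤ (G.neighborSet x).ncard :=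
        ncard_uniqueColors_add_two_le (Set.toFinite _) hux.symm hxw hne hφ
      omega
end

section
/- Let G be a simple graph with maximum degree at most 4 containing pairwise adjacent vertices x, y, z, each of degree exactly 4, whose neighbors outside the triangle are x₁, x₂ (neighbors of x), y₁, y₂ (neighbors of y), z₁, z₂ (neighbors of z), and suppose x₁, x₂, y₁, y₂, z₁, z₂ are six pairwise distinct vertices not in {x, y, z}. Set S = {x, y, z}. If the S-reduced graph G*S admits a 2-PCF 9-coloring, then G admits a 2-PCF 9-coloring. (This shows a vertex-minimum counterexample has no 3-cycle.) -/
/-!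
Keep the coloring `φ` of `G*S` off `S = {x, y, z}` and recolor `x, y, z`. In `G*S` the pendant
vertex `x₁` sees `x₂` in place of `x`, so it keeps two unique colors as long as `x` avoids at
most two colors determined by the rest of its neighborhood (none if that already carries three
unique colors, otherwise the at most two colors on it). With `φ x₁, φ x₂` this forbids at most
six of the nine colors at `x`, and similarly at `y` and `z`. Choosing the three new colors from
the remaining lists, distinct and such that `y, z` do not get exactly `φ x₁, φ x₂` (and
symmetrically), also gives each triangle vertex two unique colors. All other vertices keep their
neighborhoods and colors.
-/

theorem Set.ncard_pair_le {α : Type*} (a b : α) : ({a, b} : Set α).ncard ≤ 2 :=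
  (Set.ncard_insert_le a {b}).trans (by rw [Set.ncard_singleton])

section ColorChoice

variable {α : Type*} [Finite α]

theorem exists_notMem_of_ncard_lt {X : Set α} (h : X.ncard < Nat.card α) : ∃ a, a ∉ X := by
  obtain ⟨a, -, ha⟩ := Set.exists_mem_notMem_of_ncard_lt_ncard (s := X) (t := Set.univ)
    (by rwa [Set.ncard_univ])
  exact ⟨a, ha⟩

theorem exists_notMem_ne_and_not_both_mem {X P : Set α} {p : α}
    (hX : (insert p X).ncard + 1 < Nat.card α) (hP : P.ncard ≤ 2) :
    ∃ c ∉ X, c ≠ p ∧ ¬(c ∈ P ∧ p ∈ P) := by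
  by_cases hp : p ∈ P
  · obtain ⟨c, hc⟩ := exists_notMem_of_ncard_lt (X := insert p X ∪ (P \ {p})) (by
      have := Set.ncard_union_le (insert p X) (P \ {p})
      have := Set.ncard_sdiff_singleton_of_mem hp
      omega)
    have hcp : c ≠ p := fun h => hc (Or.inl (Or.inl h))
    exact ⟨c, fun h => hc (Or.inl (Or.inr h)), hcp, fun h => hc (Or.inr ⟨h.1, hcp⟩)⟩
  · obtain ⟨c, hc⟩ := exists_notMem_of_ncard_lt (X := insert p X) (by omega)
    exact ⟨c, fun h => hc (Or.inr h), fun h => hc (Or.inl h), fun h => hp h.2⟩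

/-- Colors `a, b, c` for a triangle: `A, B, C` are forbidden at the three vertices, and each
of `P, Q, R` is a pair of colors that the other two vertices must not use together. -/
theorem exists_triangle_colors (hα : 9 ≤ Nat.card α) {A B C P Q R : Set α}
    (hA : A.ncard ≤ 6) (hB : B.ncard ≤ 6) (hC : C.ncard ≤ 6)
    (hP : P.ncard ≤ 2) (hQ : Q.ncard ≤ 2) (hR : R.ncard ≤ 2) (hRC : R ⊆ C) :
    ∃ a b c, a ∉ A ∧ b ∉ B ∧ c ∉ C ∧ a ≠ b ∧ a ≠ c ∧ b ≠ c ∧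
      ¬(b ∈ P ∧ c ∈ P) ∧ ¬(a ∈ Q ∧ c ∈ Q) ∧ ¬(a ∈ R ∧ b ∈ R) := by
  obtain ⟨c, hc⟩ := exists_notMem_of_ncard_lt (X := C ∪ Q) (by
    have := Set.ncard_union_le C Q
    omega)
  have hcC : c ∉ C := fun h => hc (Or.inl h)
  have hcQ : c ∉ Q := fun h => hc (Or.inr h)
  obtain ⟨b, hbB, hbc, hbP⟩ := exists_notMem_ne_and_not_both_mem (X := B) (p := c) (by
    have := Set.ncard_insert_le c B
    omega) hP
  by_cases hbR : b ∈ R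
  · by_cases hcA : c ∈ A
    · obtain ⟨a, ha⟩ := exists_notMem_of_ncard_lt (X := A ∪ R) (by
        have := Set.ncard_union_le A R
        omega)
      exact ⟨a, b, c, fun h => ha (Or.inl h), hbB, hcC, fun h => ha (Or.inr (h ▸ hbR)),
        fun h => ha (Or.inl (h ▸ hcA)), hbc, hbP, fun h => hcQ h.2, fun h => ha (Or.inr h.1)⟩
    -- `c` moves to the first vertex; this frees it from `R`, which lies inside `C`
    · obtain ⟨c', hc', hc'b, hc'P⟩ :=
        exists_notMem_ne_and_not_both_mem (X := insert c C) (p := b) (by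
          rw [Set.insert_eq_of_mem (show b ∈ insert c C from Or.inr (hRC hbR))]
          have := Set.ncard_insert_le c C
          omega) hP
      exact ⟨c, b, c', hcA, hbB, fun h => hc' (Or.inr h), hbc.symm, fun h => hc' (Or.inl h.symm),
        hc'b.symm, fun h => hc'P ⟨h.2, h.1⟩, fun h => hcQ h.1, fun h => hcC (hRC h.1)⟩
  · obtain ⟨a, ha⟩ := exists_notMem_of_ncard_lt (X := A ∪ {b, c}) (by
      have := Set.ncard_union_le A {b, c}
      have := Set.ncard_pair_le b c
      omega)
    exact ⟨a, b, c, fun h => ha (Or.inl h), hbB, hcC, fun h => ha (Or.inr (Or.inl h)),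
      fun h => ha (Or.inr (Or.inr h)), hbc, hbP, fun h => hcQ h.2, fun h => hbR h.2⟩

end ColorChoice

namespace SimpleGraph

variable {V α : Type*}

def uniqueColors (f : V → α) (T : Set V) : Set α :=
  {c | {u | u ∈ T ∧ f u = c}.ncard = 1}

theorem isPCFColoring_iff {G : SimpleGraph V} {h : ℕ} {φ : V → α} :
    G.IsPCFColoring h φ ↔ (∀ ⦃u w : V⦄, G.Adj u w → φ u ≠ φ w) ∧
      ∀ v, min h (G.neighborSet v).ncard ≤ (uniqueColors φ (G.neighborSet v)).ncard :=
  Iff.rfl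

section UniqueColors

variable {f g : V → α} {T : Set V}

theorem uniqueColors_congr (h : ∀ u ∈ T, f u = g u) : uniqueColors f T = uniqueColors g T := by
  have hc : ∀ c, {u | u ∈ T ∧ f u = c} = {u | u ∈ T ∧ g u = c} := fun c =>
    Set.ext fun u => and_congr_right fun hu => by rw [h u hu]
  simp only [uniqueColors, hc]

theorem mem_uniqueColors_insert_iff {s : V} {c : α} (h : f s ≠ c) :
    c ∈ uniqueColors f (insert s T) ↔ c ∈ uniqueColors f T := by
  have hc : {u | u ∈ insert s T ∧ f u = c} = {u | u ∈ T ∧ f u = c} := by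
    ext u
    simp only [Set.mem_ofPred_eq, Set.mem_insert_iff, or_and_right, or_iff_right_iff_imp,
      and_imp]
    rintro rfl hc
    exact absurd hc h
  simp only [uniqueColors, Set.mem_ofPred_eq, hc]

theorem apply_mem_uniqueColors {w : V} (hw : w ∈ T) (h : ∀ u ∈ T, f u = f w → u = w) :
    f w ∈ uniqueColors f T :=
  Set.ncard_eq_one.2 ⟨w, Set.ext fun u =>
    ⟨fun hu => h u hu.1 hu.2, by rintro rfl; exact ⟨hw, rfl⟩⟩⟩

theorem uniqueColors_subset_image : uniqueColors f T ⊆ f '' T := by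
  intro c hc
  have hc : {u | u ∈ T ∧ f u = c}.ncard = 1 := hc
  obtain ⟨u, hu, rfl⟩ := Set.nonempty_of_ncard_ne_zero (hc ▸ one_ne_zero)
  exact ⟨u, hu, rfl⟩

theorem _root_.Set.Finite.uniqueColors (hT : T.Finite) : (uniqueColors f T).Finite :=
  (hT.image f).subset uniqueColors_subset_image

theorem two_le_ncard_uniqueColors_of_four_of_notMem {w₁ w₂ w₃ w₄ : V}
    (hw : [w₁, w₂, w₃, w₄].Nodup) (h₁₂ : f w₁ ≠ f w₂) (h₃₄ : f w₃ ≠ f w₄)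
    (h₁ : f w₁ ∉ ({f w₃, f w₄} : Set α)) :
    2 ≤ (uniqueColors f {w₁, w₂, w₃, w₄}).ncard := by
  simp only [List.nodup_cons, List.mem_cons, List.not_mem_nil, or_false, not_or,
    List.nodup_nil] at hw
  simp only [Set.mem_insert_iff, Set.mem_singleton_iff, not_or] at h₁
  have unique : ∀ w ∈ ({w₁, w₂, w₃, w₄} : Set V), (∀ u ∈ ({w₁, w₂, w₃, w₄} : Set V),
      u ≠ w → f u ≠ f w) → f w ∈ uniqueColors f {w₁, w₂, w₃, w₄} :=
    fun w hw h => apply_mem_uniqueColors hw fun u hu => not_imp_not.1 (h u hu)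
  have h₁u := unique w₁ (by simp) (by simp; aesop)
  refine (Set.one_lt_ncard_iff (Set.toFinite _ |>.uniqueColors)).2 ?_
  by_cases h₂₃ : f w₂ = f w₃
  · exact ⟨_, _, h₁u, unique w₄ (by simp) (by simp; aesop), h₁.2⟩
  by_cases h₂₄ : f w₂ = f w₄
  · exact ⟨_, _, h₁u, unique w₃ (by simp) (by simp; aesop), h₁.1⟩
  · exact ⟨_, _, h₁u, unique w₂ (by simp) (by simp; aesop), h₁₂⟩

theorem two_le_ncard_uniqueColors_of_four {w₁ w₂ w₃ w₄ : V}
    (hw : [w₁, w₂, w₃, w₄].Nodup) (h₁₂ : f w₁ ≠ f w₂) (h₃₄ : f w₃ ≠ f w₄)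
    (h : ¬(f w₁ ∈ ({f w₃, f w₄} : Set α) ∧ f w₂ ∈ ({f w₃, f w₄} : Set α))) :
    2 ≤ (uniqueColors f {w₁, w₂, w₃, w₄}).ncard := by
  by_cases h₁ : f w₁ ∈ ({f w₃, f w₄} : Set α)
  · rw [Set.insert_comm]
    exact two_le_ncard_uniqueColors_of_four_of_notMem ((List.Perm.swap _ _ _).nodup_iff.1 hw)
      h₁₂.symm h₃₄ fun h₂ => h ⟨h₁, h₂⟩
  · exact two_le_ncard_uniqueColors_of_four_of_notMem hw h₁₂ h₃₄ h₁

end UniqueColors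

/-- Giving a new neighbor of a vertex with neighbors `N` a color outside this set keeps two
unique colors around the vertex: if `N` carries three unique colors the new color can spoil at
most one of them, and otherwise the new color is itself unique. -/
noncomputable def forbiddenColors (φ : V → α) (N : Set V) : Set α :=
  if 3 ≤ (uniqueColors φ N).ncard then ∅ else φ '' N

section Pendant

variable [Finite V] {φ ψ : V → α} {N : Set V}

theorem ncard_forbiddenColors_le_two (hN : N.ncard ≤ 3) : (forbiddenColors φ N).ncard ≤ 2 := by
  unfold forbiddenColors
  split_ifs with h3
  · simp
  by_contra! h
  have himage : (φ '' N).ncard = N.ncard := le_antisymm Set.ncard_image_le (by omega)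
  have hinj : Set.InjOn φ N := Set.injOn_of_ncard_image_eq himage
  have hsub : φ '' N ⊆ uniqueColors φ N := by
    rintro _ ⟨u, hu, rfl⟩
    exact apply_mem_uniqueColors hu fun v hv hfv => hinj hv hu hfv
  have := Set.ncard_le_ncard hsub N.toFinite.uniqueColors
  omega

theorem nonempty_uniqueColors_of_insert {w : V} (hN : N.Nonempty)
    (h : min 2 (insert w N).ncard ≤ (uniqueColors φ (insert w N)).ncard) :
    (uniqueColors φ N).Nonempty := by
  have hN₁ : 0 < N.ncard := (Set.ncard_pos).2 hN
  by_cases hw : w ∈ N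
  · rw [Set.insert_eq_of_mem hw] at h
    exact Set.nonempty_of_ncard_ne_zero (by omega)
  rw [Set.ncard_insert_of_notMem hw] at h
  obtain ⟨c₁, c₂, h₁, h₂, hne⟩ :=
    (Set.one_lt_ncard_iff ((insert w N).toFinite.uniqueColors (f := φ))).1 (by omega)
  by_cases hc : φ w = c₁
  · exact ⟨c₂, (mem_uniqueColors_insert_iff (hc ▸ hne)).1 h₂⟩
  · exact ⟨c₁, (mem_uniqueColors_insert_iff hc).1 h₁⟩

/-- A vertex next to `s ∈ S` sees, in `G.reduce S`, the other neighbor `w` of `s` in place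
of `s`. -/
theorem min_two_le_ncard_uniqueColors_insert {s w : V} (hs : s ∉ N)
    (hφ : min 2 (insert w N).ncard ≤ (uniqueColors φ (insert w N)).ncard)
    (hψ : ∀ u ∈ N, ψ u = φ u) (hψs : ψ s ∉ forbiddenColors φ N) :
    min 2 (insert s N).ncard ≤ (uniqueColors ψ (insert s N)).ncard := by
  have hkeep : ∀ c ∈ uniqueColors φ N, c ≠ ψ s → c ∈ uniqueColors ψ (insert s N) :=
    fun c hc hcs => (mem_uniqueColors_insert_iff hcs.symm).2 (uniqueColors_congr hψ ▸ hc)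
  have hsu : ψ s ∉ ψ '' N → ψ s ∈ uniqueColors ψ (insert s N) := fun hsN =>
    apply_mem_uniqueColors (Set.mem_insert _ _) fun u hu hfu =>
      hu.resolve_right fun huN => hsN ⟨u, huN, hfu⟩
  rcases N.eq_empty_or_nonempty with rfl | hN
  · rw [insert_empty_eq] at hsu ⊢
    rw [Set.ncard_singleton]
    exact (min_le_right _ _).trans
      ((Set.ncard_pos (Set.toFinite _ |>.uniqueColors)).2 ⟨_, hsu (by simp)⟩)
  refine (min_le_left _ _).trans ?_
  unfold forbiddenColors at hψs
  split_ifs at hψs with h3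
  · calc 2 ≤ (uniqueColors φ N \ {ψ s}).ncard := by
          have := Set.le_ncard_sdiff {ψ s} (uniqueColors φ N)
          rw [Set.ncard_singleton] at this
          omega
      _ ≤ _ := Set.ncard_le_ncard (fun c hc => hkeep c hc.1 hc.2)
          (Set.toFinite _ |>.uniqueColors)
  · obtain ⟨c, hc⟩ := nonempty_uniqueColors_of_insert hN hφ
    have hcs : c ≠ ψ s := fun h => hψs (h ▸ uniqueColors_subset_image hc)
    refine (Set.one_lt_ncard_iff (Set.toFinite _ |>.uniqueColors)).2
      ⟨c, ψ s, hkeep c hc hcs, hsu ?_, hcs⟩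
    rwa [Set.image_congr hψ]

end Pendant

section Reduce

variable {G : SimpleGraph V} {S : Set V} {v : V}

theorem reduce_neighborSet_of_forall_not_adj (hv : v ∉ S) (h : ∀ s ∈ S, ¬G.Adj v s) :
    (G.reduce S).neighborSet v = G.neighborSet v := by
  ext u
  constructor
  · rintro ⟨-, -, -, hvu | ⟨s, hs, hvs, -⟩⟩
    exacts [hvu, absurd hvs (h s hs)]
  · intro hvu
    exact ⟨hv, fun hu => h u hu hvu, hvu.ne, Or.inl hvu⟩

theorem reduce_neighborSet_eq_insert {s w : V} (hv : v ∉ S) (hs : s ∈ S) (hvs : G.Adj v s)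
    (hsub : ∀ t ∈ S, G.Adj v t → t = s) (hNs : G.neighborSet s \ S = {v, w}) (hvw : v ≠ w) :
    (G.reduce S).neighborSet v = insert w (G.neighborSet v \ {s}) := by
  have hw : w ∈ G.neighborSet s \ S := hNs ▸ Or.inr rfl
  ext u
  constructor
  · rintro ⟨-, hu, hvu, hvu' | ⟨t, ht, hvt, htu⟩⟩
    · exact Or.inr ⟨hvu', fun h => hu (h ▸ hs)⟩
    · obtain rfl := hsub t ht hvt
      have : u ∈ G.neighborSet t \ S := ⟨htu, hu⟩
      rw [hNs] at this
      exact Or.inl (this.resolve_left hvu.symm)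
  · rintro (rfl | ⟨hvu, hus⟩)
    · exact ⟨hv, hw.2, hvw, Or.inr ⟨s, hs, hvs, hw.1⟩⟩
    · exact ⟨hv, fun h => hus (hsub u h hvu), hvu.ne, Or.inl hvu⟩

end Reduce

/-- The local conditions at a vertex `s ∈ S` under which recoloring `S` by `ψ` turns a 2-PCF
coloring `φ` of `G.reduce S` into one of `G`. -/
def IsPCFExtensionAt (G : SimpleGraph V) (S : Set V) (φ ψ : V → α) (s : V) : Prop :=
  (G.neighborSet s \ S).ncard = 2 ∧
  (∀ u, G.Adj s u → ψ s ≠ ψ u) ∧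
  min 2 (G.neighborSet s).ncard ≤ (uniqueColors ψ (G.neighborSet s)).ncard ∧
  ∀ w ∉ S, G.Adj s w → ψ s ∉ forbiddenColors φ (G.neighborSet w \ {s})

theorem isPCFColoring_of_reduce [Finite V] {G : SimpleGraph V} {S : Set V} {φ ψ : V → α}
    (hφ : (G.reduce S).IsPCFColoring 2 φ) (hψ : ∀ u ∉ S, ψ u = φ u)
    (hS : ∀ w ∉ S, ∀ s ∈ S, ∀ t ∈ S, G.Adj w s → G.Adj w t → s = t)
    (hext : ∀ s ∈ S, G.IsPCFExtensionAt S φ ψ s) : G.IsPCFColoring 2 ψ := by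
  rw [isPCFColoring_iff] at hφ ⊢
  refine ⟨fun u w huw => ?_, fun v => ?_⟩
  · by_cases hu : u ∈ S
    · exact (hext u hu).2.1 w huw
    by_cases hw : w ∈ S
    · exact ((hext w hw).2.1 u huw.symm).symm
    rw [hψ u hu, hψ w hw]
    exact hφ.1 ⟨hu, hw, huw.ne, Or.inl huw⟩
  by_cases hv : v ∈ S
  · exact (hext v hv).2.2.1
  by_cases hadj : ∃ s ∈ S, G.Adj v s
  · obtain ⟨s, hs, hvs⟩ := hadj
    have hsub : ∀ t ∈ S, G.Adj v t → t = s := fun t ht hvt => hS v hv t ht s hs hvt hvs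
    obtain ⟨w, hvw, hNs⟩ : ∃ w, v ≠ w ∧ G.neighborSet s \ S = {v, w} := by
      obtain ⟨p, q, hpq, hNs⟩ := Set.ncard_eq_two.1 (hext s hs).1
      have hv' : v ∈ ({p, q} : Set V) := hNs ▸ ⟨hvs.symm, hv⟩
      rcases hv' with rfl | rfl
      exacts [⟨q, hpq, hNs⟩, ⟨p, hpq.symm, hNs.trans (Set.pair_comm _ _)⟩]
    have hφv := hφ.2 v
    rw [reduce_neighborSet_eq_insert hv hs hvs hsub hNs hvw] at hφv
    rw [← Set.insert_eq_of_mem (show s ∈ G.neighborSet v from hvs), ← Set.insert_sdiff_singleton]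
    exact min_two_le_ncard_uniqueColors_insert (fun h => h.2 rfl) hφv
      (fun u hu => hψ u fun huS => hu.2 (hsub u huS hu.1)) ((hext s hs).2.2.2 v hv hvs.symm)
  · push Not at hadj
    rw [uniqueColors_congr (T := G.neighborSet v) fun u hu => hψ u fun huS => hadj u huS hu,
      ← reduce_neighborSet_of_forall_not_adj hv hadj]
    exact hφ.2 v

section Triangle

variable {G : SimpleGraph V}

noncomputable def forbiddenColorsAt (G : SimpleGraph V) (φ : V → α) (s w w' : V) : Set α :=
  forbiddenColors φ (G.neighborSet w \ {s}) ∪ forbiddenColors φ (G.neighborSet w' \ {s}) ∪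
    {φ w, φ w'}

theorem ncard_forbiddenColorsAt_le [Finite V] {φ : V → α} {s w w' : V}
    (hw : (G.neighborSet w).ncard ≤ 4) (hw' : (G.neighborSet w').ncard ≤ 4)
    (hsw : G.Adj s w) (hsw' : G.Adj s w') : (forbiddenColorsAt G φ s w w').ncard ≤ 6 := by
  have h := ncard_forbiddenColors_le_two (φ := φ) (N := G.neighborSet w \ {s})
    (by rw [Set.ncard_sdiff_singleton_of_mem ((G.mem_neighborSet w s).2 hsw.symm)]; omega)
  have h' := ncard_forbiddenColors_le_two (φ := φ) (N := G.neighborSet w' \ {s})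
    (by rw [Set.ncard_sdiff_singleton_of_mem ((G.mem_neighborSet w' s).2 hsw'.symm)]; omega)
  have := Set.ncard_union_le (forbiddenColors φ (G.neighborSet w \ {s}) ∪
    forbiddenColors φ (G.neighborSet w' \ {s})) {φ w, φ w'}
  have := Set.ncard_union_le (forbiddenColors φ (G.neighborSet w \ {s}))
    (forbiddenColors φ (G.neighborSet w' \ {s}))
  have := Set.ncard_pair_le (φ w) (φ w')
  unfold forbiddenColorsAt
  omega

theorem neighborSet_eq_of_ncard_eq_four [Finite V] {v a b c d : V}
    (h : (G.neighborSet v).ncard = 4) (ha : G.Adj v a) (hb : G.Adj v b) (hc : G.Adj v c)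
    (hd : G.Adj v d) (hnd : [a, b, c, d].Nodup) : G.neighborSet v = {a, b, c, d} := by
  simp only [List.nodup_cons, List.mem_cons, List.not_mem_nil, or_false, not_or,
    not_false_eq_true, List.nodup_nil, and_self, and_true] at hnd
  refine (Set.eq_of_subset_of_ncard_le ?_ ?_).symm
  · rintro u (rfl | rfl | rfl | rfl) <;> assumption
  · rw [h, Set.ncard_insert_of_notMem (by simp [*]), Set.ncard_insert_of_notMem (by simp [*]),
      Set.ncard_pair hnd.2.2]

theorem isPCFExtensionAt_of_neighborSet_eq [Finite V] {S : Set V} {φ ψ : V → α}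
    {s y z w w' : V} (hφ : (G.reduce S).IsPCFColoring 2 φ) (hψ : ∀ u ∉ S, ψ u = φ u)
    (hS : S = {s, y, z}) (hN : G.neighborSet s = {y, z, w, w'}) (hnd : [y, z, w, w'].Nodup)
    (hsy : ψ s ≠ ψ y) (hsz : ψ s ≠ ψ z) (hyz : ψ y ≠ ψ z)
    (hbad : ψ s ∉ forbiddenColorsAt G φ s w w')
    (hP : ¬(ψ y ∈ ({φ w, φ w'} : Set α) ∧ ψ z ∈ ({φ w, φ w'} : Set α))) :
    G.IsPCFExtensionAt S φ ψ s := by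
  have hadj : ∀ u, G.Adj s u ↔ u = y ∨ u = z ∨ u = w ∨ u = w' := fun u => by
    rw [← mem_neighborSet, hN]
    simp only [Set.mem_insert_iff, Set.mem_singleton_iff]
  have hsw := (hadj w).2 (by simp)
  have hsw' := (hadj w').2 (by simp)
  have hnd' := hnd
  simp only [List.nodup_cons, List.mem_cons, List.not_mem_nil, or_false, not_or,
    not_false_eq_true, List.nodup_nil, and_self, and_true] at hnd
  obtain ⟨⟨-, hyw, hyw'⟩, ⟨hzw, hzw'⟩, hww'⟩ := hnd
  have hyS : y ∈ S := hS ▸ by simp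
  have hzS : z ∈ S := hS ▸ by simp
  have hwS : w ∉ S := by
    rw [hS]
    simp [hsw.ne.symm, Ne.symm hyw, Ne.symm hzw]
  have hw'S : w' ∉ S := by
    rw [hS]
    simp [hsw'.ne.symm, Ne.symm hyw', Ne.symm hzw']
  have hφww' : ψ w ≠ ψ w' := by
    rw [hψ w hwS, hψ w' hw'S]
    exact hφ.1 ⟨hwS, hw'S, hww', Or.inr ⟨s, hS ▸ Or.inl rfl, hsw.symm, hsw'⟩⟩
  unfold forbiddenColorsAt at hbad
  rw [← hψ w hwS, ← hψ w' hw'S] at hbad hP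
  refine ⟨?_, fun u hu => ?_, ?_, fun u hu hsu => ?_⟩
  · have hNS : G.neighborSet s \ S = {w, w'} := by
      ext u
      rw [hN]
      constructor
      · rintro ⟨rfl | rfl | rfl | rfl, huS⟩
        exacts [absurd hyS huS, absurd hzS huS, Or.inl rfl, Or.inr rfl]
      · rintro (rfl | rfl)
        exacts [⟨by simp, hwS⟩, ⟨by simp, hw'S⟩]
    rw [hNS, Set.ncard_pair hww']
  · rcases (hadj u).1 hu with rfl | rfl | rfl | rfl
    exacts [hsy, hsz, fun h => hbad (Or.inr (Or.inl h)), fun h => hbad (Or.inr (Or.inr h))]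
  · rw [hN]
    exact (min_le_left _ _).trans (two_le_ncard_uniqueColors_of_four hnd' hyz hφww' hP)
  · rcases (hadj u).1 hsu with rfl | rfl | rfl | rfl
    exacts [absurd hyS hu, absurd hzS hu, fun h => hbad (Or.inl (Or.inl h)),
      fun h => hbad (Or.inl (Or.inr h))]

theorem eq_of_adj_of_adj_of_triangle {x y z x₁ x₂ y₁ y₂ z₁ z₂ : V}
    (hNx : G.neighborSet x = {y, z, x₁, x₂}) (hNy : G.neighborSet y = {x, z, y₁, y₂})
    (hNz : G.neighborSet z = {x, y, z₁, z₂}) (hnd : [x, y, z, x₁, x₂, y₁, y₂, z₁, z₂].Nodup) :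
    ∀ w ∉ ({x, y, z} : Set V), ∀ s ∈ ({x, y, z} : Set V), ∀ t ∈ ({x, y, z} : Set V),
      G.Adj w s → G.Adj w t → s = t := by
  simp only [List.nodup_cons, List.mem_cons, List.not_mem_nil, or_false, not_or,
    not_false_eq_true, List.nodup_nil, and_self, and_true] at hnd
  rintro w hw s (rfl | rfl | rfl) t (rfl | rfl | rfl) hs ht <;>
    rw [G.adj_comm, ← mem_neighborSet] at hs ht <;>
    simp only [hNx, hNy, hNz, Set.mem_insert_iff, Set.mem_singleton_iff] at hs ht hw <;>
    aesop

end Triangle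

end SimpleGraph

theorem reduce_triangle_all_four_vertices {V : Type*} [Fintype V]
    (G : SimpleGraph V)
    (hΔ : ∀ u : V, {w | G.Adj u w}.ncard ≤ 4)
    (x y z x₁ x₂ y₁ y₂ z₁ z₂ : V)
    (hxy : G.Adj x y) (hyz : G.Adj y z) (hxz : G.Adj x z)
    (hdx : {w | G.Adj x w}.ncard = 4)
    (hdy : {w | G.Adj y w}.ncard = 4)
    (hdz : {w | G.Adj z w}.ncard = 4)
    (hxx₁ : G.Adj x x₁) (hxx₂ : G.Adj x x₂)
    (hyy₁ : G.Adj y y₁) (hyy₂ : G.Adj y y₂)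
    (hzz₁ : G.Adj z z₁) (hzz₂ : G.Adj z z₂)
    (hdist : List.Pairwise (· ≠ ·) [x, y, z, x₁, x₂, y₁, y₂, z₁, z₂])
    (h : (G.reduce {x, y, z}).HasPCFColoring 2 9) :
    G.HasPCFColoring 2 9 := by
  classical
  obtain ⟨φ, hφ⟩ := h
  obtain ⟨hndx, hndy, hndz⟩ :
      [y, z, x₁, x₂].Nodup ∧ [x, z, y₁, y₂].Nodup ∧ [x, y, z₁, z₂].Nodup := by
    refine ⟨hdist.sublist ?_, hdist.sublist ?_, hdist.sublist ?_⟩ <;>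
      repeat' first
        | exact List.nil_sublist _
        | apply List.Sublist.cons_cons
        | apply List.Sublist.cons
  have hNx := G.neighborSet_eq_of_ncard_eq_four hdx hxy hxz hxx₁ hxx₂ hndx
  have hNy := G.neighborSet_eq_of_ncard_eq_four hdy hxy.symm hyz hyy₁ hyy₂ hndy
  have hNz := G.neighborSet_eq_of_ncard_eq_four hdz hxz.symm hyz.symm hzz₁ hzz₂ hndz
  obtain ⟨a, b, c, ha, hb, hc, hab, hac, hbc, hP, hQ, hR⟩ := exists_triangle_colors (by simp)
    (G.ncard_forbiddenColorsAt_le (φ := φ) (hΔ x₁) (hΔ x₂) hxx₁ hxx₂)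
    (G.ncard_forbiddenColorsAt_le (φ := φ) (hΔ y₁) (hΔ y₂) hyy₁ hyy₂)
    (G.ncard_forbiddenColorsAt_le (φ := φ) (hΔ z₁) (hΔ z₂) hzz₁ hzz₂)
    (Set.ncard_pair_le (φ x₁) (φ x₂)) (Set.ncard_pair_le (φ y₁) (φ y₂)) (Set.ncard_pair_le _ _)
    Set.subset_union_right
  let ψ : V → Fin 9 := fun v =>
    if v = x then a else if v = y then b else if v = z then c else φ v
  have hψ : ∀ u ∉ ({x, y, z} : Set V), ψ u = φ u := fun u hu => by
    simp only [Set.mem_insert_iff, Set.mem_singleton_iff, not_or] at hu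
    simp [ψ, hu.1, hu.2.1, hu.2.2]
  have hψx : ψ x = a := if_pos rfl
  have hψy : ψ y = b := by simp [ψ, hxy.ne.symm]
  have hψz : ψ z = c := by simp [ψ, hxz.ne.symm, hyz.ne.symm]
  simp only [← hψx, ← hψy, ← hψz] at ha hb hc hab hac hbc hP hQ hR
  refine ⟨ψ, G.isPCFColoring_of_reduce hφ hψ
    (G.eq_of_adj_of_adj_of_triangle hNx hNy hNz hdist) ?_⟩
  rintro s (rfl | rfl | rfl)
  · exact SimpleGraph.isPCFExtensionAt_of_neighborSet_eq hφ hψ rfl hNx hndx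
      hab hac hbc ha hP
  · exact SimpleGraph.isPCFExtensionAt_of_neighborSet_eq hφ hψ (Set.insert_comm _ _ _) hNy hndy
      hab.symm hbc hac hb hQ
  · exact SimpleGraph.isPCFExtensionAt_of_neighborSet_eq hφ hψ
      (by rw [Set.pair_comm, Set.insert_comm]) hNz hndz hac.symm hbc.symm hab hc hR
end
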